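/- arXiv:2101.02400 — 5 statements merged into one kernel-verified Lean document; each statement's English description precedes it below -/
import Mathlib

section
/- In a 2³ factorial design with no three-way interaction (τ_ABC = 0), for any coherent weighting scheme π induced by a probability distribution π_{abc} on {0,1}³ with marginals π_{bc}, π_a, etc., the general main effect τ_A(π_BC) = Σ_{b,c} π_{bc} τ_{A|bc} equals τ_A(π_B × π_C) = Σ_{b,c} π_b π_c τ_{A|bc}, the main effect under the product weighting scheme with the same one-dimensional marginals. -/
/-- In a 2³ factorial design with no three-way interaction, for any coherent weighting
scheme induced by a joint probability `p` on `{0,1}³`, the general main effect of A under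
the (B,C)-marginal weights equals the main effect under the product of the one-dimensional
marginals. -/
theorem no_three_way_interaction_product_weights_23
    (Ybar : Bool → Bool → Bool → ℝ) (p : Bool → Bool → Bool → ℝ)
    (hp : ∀ a b c, 0 ≤ p a b c)
    (hsum : ∑ a : Bool, ∑ b : Bool, ∑ c : Bool, p a b c = 1)
    (hABC : Ybar true true true - Ybar true true false - Ybar true false true
        - Ybar false true true + Ybar true false false + Ybar false true false
        + Ybar false false true - Ybar false false false = 0) :
    let τA : Bool → Bool → ℝ := fun b c => Ybar true b c - Ybar false b c
    let πbc : Bool → Bool → ℝ := fun b c => ∑ a : Bool, p a b c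
    let πb : Bool → ℝ := fun b => ∑ a : Bool, ∑ c : Bool, p a b c
    let πc : Bool → ℝ := fun c => ∑ a : Bool, ∑ b : Bool, p a b c
    (∑ b : Bool, ∑ c : Bool, πbc b c * τA b c)
      = ∑ b : Bool, ∑ c : Bool, πb b * πc c * τA b c := by
  intro τA πbc πc πb
  simp only [τA, πbc, πc, πb, Fintype.sum_bool] at *
  set q00 := p true false false + p false false false with hq00
  set q01 := p true false true + p false false true with hq01
  set q10 := p true true false + p false true false with hq10
  set q11 := p true true true + p false true true with hq11
  linear_combination (q11 * q00 - q10 * q01) * hABC -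
    (q11 * (Ybar true true true - Ybar false true true)
      + q10 * (Ybar true true false - Ybar false true false)
      + q01 * (Ybar true false true - Ybar false false true)
      + q00 * (Ybar true false false - Ybar false false false)) * hsum
end

section
/- Under a 2^K design with no three-way interactions, for any coherent weighting scheme π induced by a probability distribution on {0,1}^K and any nonempty 𝒦 ⊆ [K], the general factorial effect τ_{𝒦,π} = Σ_{z_{𝒦ᶜ}} π(z_{𝒦ᶜ}) τ_𝒦(z_{𝒦ᶜ}) equals τ_{𝒦,π×}, where π× is the product weighting scheme with the same one-dimensional marginals π(1_k) for each factor k. -/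
/-- The difference operator in coordinate `k` applied to `Y : {0,1}^K → ℝ`. -/
def diffOp {K : ℕ} (k : Fin K) (Y : (Fin K → Bool) → ℝ) : (Fin K → Bool) → ℝ :=
  fun z => Y (Function.update z k true) - Y (Function.update z k false)

namespace CoherentAux

variable {K : ℕ}

/-- `F` is constant in coordinate `k`. -/
def Const (k : Fin K) (F : (Fin K → Bool) → ℝ) : Prop :=
  ∀ z b, F (Function.update z k b) = F z

lemma const_diffOp_self (k : Fin K) (F : (Fin K → Bool) → ℝ) : Const k (diffOp k F) := by
  intro z b
  simp [diffOp, Function.update_idem]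

lemma const_diffOp (j k : Fin K) (h : j ≠ k) (F : (Fin K → Bool) → ℝ) (hF : Const k F) :
    Const k (diffOp j F) := by
  intro z b
  simp only [diffOp, Function.update_comm h.symm]
  rw [hF, hF]

lemma diffOp_eq_zero_of_const (k : Fin K) (F : (Fin K → Bool) → ℝ) (hF : Const k F) :
    ∀ z, diffOp k F z = 0 := by
  intro z
  simp [diffOp, hF z true, hF z false]

lemma diffOp_comm (j k : Fin K) (h : j ≠ k) (F : (Fin K → Bool) → ℝ) :
    ∀ z, diffOp j (diffOp k F) z = diffOp k (diffOp j F) z := by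
  intro z
  simp only [diffOp, Function.update_comm h]
  ring

lemma const_of_diff_zero (j : Fin K) (G : (Fin K → Bool) → ℝ)
    (h : ∀ z, diffOp j G z = 0) : Const j G := by
  intro z b
  have h1 : G (Function.update z j true) = G (Function.update z j false) := by
    have := h z
    simp only [diffOp] at this
    linarith
  have h2 : G (Function.update z j (z j)) = G z := by rw [Function.update_eq_self]
  cases b <;> cases hz : z j <;> simp_all

lemma const_foldr (Y : (Fin K → Bool) → ℝ) (l : List (Fin K)) (k : Fin K) (hk : k ∈ l) :
    Const k (l.foldr diffOp Y) := by
  induction l with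
  | nil => cases hk
  | cons a t ih =>
    rcases eq_or_ne k a with rfl | hka
    · exact const_diffOp_self _ _
    · have hkt : k ∈ t := by
        rcases List.mem_cons.mp hk with h | h
        · exact absurd h hka
        · exact h
      exact const_diffOp a k (Ne.symm hka) _ (ih hkt)

lemma foldr_zero (Y : (Fin K → Bool) → ℝ)
    (h3 : ∀ l : List (Fin K), l.Nodup → l.length = 3 → ∀ z, (l.foldr diffOp Y) z = 0) :
    ∀ l : List (Fin K), l.Nodup → 3 ≤ l.length → ∀ z, (l.foldr diffOp Y) z = 0 := by
  intro l
  induction l with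
  | nil => simp
  | cons a t ih =>
    intro hnd hlen z
    rcases eq_or_lt_of_le hlen with h | h
    · exact h3 (a :: t) hnd h.symm z
    · have ht : 3 ≤ t.length := by
        simp only [List.length_cons] at h
        omega
      have h0 := ih (List.Nodup.of_cons hnd) ht
      simp only [List.foldr_cons, diffOp, h0]
      ring

lemma second_diff_zero (Y : (Fin K → Bool) → ℝ)
    (h3 : ∀ l : List (Fin K), l.Nodup → l.length = 3 → ∀ z, (l.foldr diffOp Y) z = 0)
    (l : List (Fin K)) (hnd : l.Nodup) (hne : l ≠ []) (j k : Fin K) (hjk : j ≠ k) :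
    ∀ z, diffOp j (diffOp k (l.foldr diffOp Y)) z = 0 := by
  by_cases hk : k ∈ l
  · intro z
    have h0 : diffOp k (l.foldr diffOp Y) = fun _ => 0 :=
      funext (diffOp_eq_zero_of_const _ _ (const_foldr Y l k hk))
    rw [h0]
    simp [diffOp]
  by_cases hj : j ∈ l
  · intro z
    rw [diffOp_comm j k hjk]
    have h0 : diffOp j (l.foldr diffOp Y) = fun _ => 0 :=
      funext (diffOp_eq_zero_of_const _ _ (const_foldr Y l j hj))
    rw [h0]
    simp [diffOp]
  · have hnd2 : (j :: k :: l).Nodup := by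
      simp only [List.nodup_cons, List.mem_cons]
      refine ⟨?_, hk, hnd⟩
      push_neg
      exact ⟨hjk, hj⟩
    have hlen : 3 ≤ (j :: k :: l).length := by
      have : 1 ≤ l.length := by
        cases l with
        | nil => exact absurd rfl hne
        | cons a t => simp
      simp only [List.length_cons]
      omega
    intro z
    have := foldr_zero Y h3 (j :: k :: l) hnd2 hlen z
    simpa using this

lemma eq_const (G : (Fin K → Bool) → ℝ) (h : ∀ k, Const k G) :
    ∀ z, G z = G (fun _ => false) := by
  suffices H : ∀ S : Finset (Fin K), ∀ z : Fin K → Bool,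
      (∀ k, z k = true → k ∈ S) → G z = G (fun _ => false) by
    intro z
    exact H Finset.univ z (fun k _ => Finset.mem_univ k)
  intro S
  induction S using Finset.induction with
  | empty =>
    intro z hz
    have hzz : z = fun _ => false := by
      funext k
      cases hk : z k
      · rfl
      · exact absurd (hz k hk) (Finset.notMem_empty k)
    rw [hzz]
  | @insert a S ha ih =>
    intro z hz
    rw [← h a z false]
    apply ih
    intro k hk
    rcases eq_or_ne k a with rfl | hka
    · simp [Function.update_self] at hk
    · rw [Function.update_of_ne hka] at hk
      rcases Finset.mem_insert.mp (hz k hk) with h' | h'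
      · exact absurd h' hka
      · exact h'

lemma diff_const_val (D : (Fin K → Bool) → ℝ)
    (h2 : ∀ j k, j ≠ k → ∀ z, diffOp j (diffOp k D) z = 0) (a : Fin K) :
    ∀ z, diffOp a D z = diffOp a D (fun _ => false) := by
  apply eq_const
  intro j
  rcases eq_or_ne j a with rfl | hja
  · exact const_diffOp_self _ _
  · exact const_of_diff_zero j _ (h2 j a hja)

lemma additive_aux (D : (Fin K → Bool) → ℝ)
    (h2 : ∀ j k, j ≠ k → ∀ z, diffOp j (diffOp k D) z = 0) :
    ∀ S : Finset (Fin K), ∀ z : Fin K → Bool, (∀ k, z k = true ↔ k ∈ S) →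
      D z = D (fun _ => false) + ∑ k ∈ S, diffOp k D (fun _ => false) := by
  intro S
  induction S using Finset.induction with
  | empty =>
    intro z hz
    have hzz : z = fun _ => false := by
      funext k
      cases hk : z k
      · rfl
      · exact absurd ((hz k).mp hk) (Finset.notMem_empty k)
    rw [hzz]
    simp
  | @insert a S hna' ih' =>
    intro z hz
    have hza : z a = true := (hz a).mpr (Finset.mem_insert_self a S)
    set z' := Function.update z a false with hz'def
    have hzz : z = Function.update z' a true := by
      funext k
      rcases eq_or_ne k a with rfl | hk
      · simp [z', hza]
      · simp [z', Function.update_of_ne hk]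
    have hiz : ∀ k, z' k = true ↔ k ∈ S := by
      intro k
      rcases eq_or_ne k a with rfl | hk
      · simp [z', hna']
      · rw [hz'def, Function.update_of_ne hk]
        rw [hz k, Finset.mem_insert]
        constructor
        · rintro (h' | h')
          · exact absurd h' hk
          · exact h'
        · intro h'
          exact Or.inr h'
    have hz'a : Function.update z' a false = z' := by
      simp [z', Function.update_idem]
    have key : D z - D z' = diffOp a D (fun _ => false) := by
      rw [← diff_const_val D h2 a z']
      simp only [diffOp, hz'a, ← hzz]
    rw [Finset.sum_insert hna']
    have hih := ih' z' hiz
    linarith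

lemma additive (D : (Fin K → Bool) → ℝ)
    (h2 : ∀ j k, j ≠ k → ∀ z, diffOp j (diffOp k D) z = 0) (z : Fin K → Bool) :
    D z = D (fun _ => false) + ∑ k, (if z k then diffOp k D (fun _ => false) else 0) := by
  have h := additive_aux D h2 (Finset.univ.filter (fun k => z k = true)) z (by
    intro k
    simp)
  rw [h, Finset.sum_filter]

lemma sum_prod_eq (g : Fin K → Bool → ℝ) :
    ∑ z : Fin K → Bool, ∏ k, g k (z k) = ∏ k, (g k true + g k false) := by
  rw [← Fintype.piFinset_univ, ← Finset.prod_univ_sum]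
  congr 1
  funext k
  simp [Fintype.sum_bool]

end CoherentAux

open CoherentAux in
/-- Under a `2^K` design with no three-way interactions, for any coherent weighting scheme
induced by a joint probability `p` on `{0,1}^K` and any nonempty set of factors (given as a
duplicate-free nonempty list `l`), the general factorial effect (the `p`-weighted average of
the conditional effects) equals the effect under the product weighting scheme `q` with the
same one-dimensional marginals. -/
theorem coherent_equals_product_weights
    {K : ℕ} (Y : (Fin K → Bool) → ℝ) (p : (Fin K → Bool) → ℝ)
    (hp : ∀ z, 0 ≤ p z) (hsum : ∑ z, p z = 1)
    (h3 : ∀ l : List (Fin K), l.Nodup → l.length = 3 →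
      ∀ z, (l.foldr diffOp Y) z = 0)
    (l : List (Fin K)) (hnd : l.Nodup) (hne : l ≠ []) :
    let m : Fin K → ℝ := fun k => ∑ z, if z k then p z else 0
    let q : (Fin K → Bool) → ℝ := fun z => ∏ k, if z k then m k else 1 - m k
    ∑ z, p z * (l.foldr diffOp Y) z = ∑ z, q z * (l.foldr diffOp Y) z := by
  intro m q
  set D := l.foldr diffOp Y with hD
  have h2 : ∀ j k, j ≠ k → ∀ z, diffOp j (diffOp k D) z = 0 :=
    fun j k hjk => second_diff_zero Y h3 l hnd hne j k hjk
  -- expansion of a weighted sum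
  have expand : ∀ w : (Fin K → Bool) → ℝ, ∑ z, w z * D z =
      (∑ z, w z) * D (fun _ => false) +
        ∑ k, (diffOp k D (fun _ => false)) * (∑ z, if z k then w z else 0) := by
    intro w
    have e1 : ∑ z, w z * D z = ∑ z, (w z * D (fun _ => false) +
        ∑ k, (if z k then diffOp k D (fun _ => false) * w z else 0)) := by
      apply Finset.sum_congr rfl
      intro z _
      rw [additive D h2 z, mul_add, Finset.mul_sum]
      congr 1
      apply Finset.sum_congr rfl
      intro k _
      split_ifs <;> ring
    rw [e1, Finset.sum_add_distrib, ← Finset.sum_mul, Finset.sum_comm]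
    congr 1
    apply Finset.sum_congr rfl
    intro k _
    rw [Finset.mul_sum]
    exact Finset.sum_congr rfl fun z _ => by split_ifs <;> ring
  -- q has total mass 1
  have hqsum : ∑ z, q z = 1 := by
    set g : Fin K → Bool → ℝ := fun k b => if b then m k else 1 - m k with hg
    have h1 : ∀ z : Fin K → Bool, q z = ∏ k, g k (z k) := fun z => rfl
    rw [Finset.sum_congr rfl (fun z _ => h1 z), sum_prod_eq g]
    have h2' : ∀ k : Fin K, g k true + g k false = 1 := by
      intro k
      simp only [g]
      rw [if_pos trivial, if_neg Bool.false_ne_true]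
      ring
    rw [Finset.prod_congr rfl (fun k _ => h2' k)]
    simp
  -- marginals of q agree with those of p
  have hqmarg : ∀ k : Fin K, (∑ z, if z k then q z else 0) = m k := by
    intro k
    set g : Fin K → Bool → ℝ := fun j b => if j = k then (if b then m k else 0)
      else (if b then m j else 1 - m j) with hg
    have hpt : ∀ z : Fin K → Bool, (if z k then q z else 0) = ∏ j, g j (z j) := by
      intro z
      cases hzk : z k with
      | false =>
        rw [if_neg Bool.false_ne_true]
        symm
        apply Finset.prod_eq_zero (Finset.mem_univ k)
        simp [g, hzk]
      | true =>
        simp only [hzk, if_true, q]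
        apply Finset.prod_congr rfl
        intro j _
        rcases eq_or_ne j k with rfl | hjk
        · simp [g, hzk]
        · simp [g, hjk]
    rw [Finset.sum_congr rfl (fun z _ => hpt z), sum_prod_eq g]
    have h2' : ∀ j : Fin K, g j true + g j false = if j = k then m k else 1 := by
      intro j
      rcases eq_or_ne j k with rfl | hj
      · simp [g]
      · simp only [g, if_neg hj]
        rw [if_pos trivial, if_neg Bool.false_ne_true]
        ring
    rw [Finset.prod_congr rfl (fun j _ => h2' j)]
    simp
  rw [expand p, expand q, hsum, hqsum]
  congr 1
  apply Finset.sum_congr rfl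
  intro k _
  rw [hqmarg k]
end

section
/- In a completely randomized experiment, the covariance estimator V̂ = diag{Ŝ(z,z)/N_z}, where Ŝ(z,z) is the within-group sample variance at level z, satisfies E(V̂) − cov(Ŷ) = N^{-1} S, which is positive semi-definite; hence V̂ is a conservative estimator of cov(Ŷ). -/
namespace VEC


variable {N Q : ℕ}

def Sset (N Q : ℕ) (Nz : Fin Q → ℕ) : Finset (Fin N → Fin Q) :=
  Finset.univ.filter fun ω => ∀ z, (Finset.univ.filter fun i => ω i = z).card = Nz z

lemma filter_comp_card (ω : Fin N → Fin Q) (σ : Equiv.Perm (Fin N)) (z : Fin Q) :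
    (Finset.univ.filter fun i => ω (σ i) = z).card
      = (Finset.univ.filter fun i => ω i = z).card := by
  apply Finset.card_bij' (fun i _ => σ i) (fun i _ => σ.symm i) <;> simp

lemma comp_mem {Nz : Fin Q → ℕ} {ω : Fin N → Fin Q} (h : ω ∈ Sset N Q Nz)
    (σ : Equiv.Perm (Fin N)) : ω ∘ σ ∈ Sset N Q Nz := by
  simp only [Sset, Finset.mem_filter, Finset.mem_univ, true_and] at h ⊢
  intro z
  rw [← h z, ← filter_comp_card ω σ z]
  rfl

lemma sum_comp (Nz : Fin Q → ℕ) (f : (Fin N → Fin Q) → ℝ) (σ : Equiv.Perm (Fin N)) :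
    ∑ ω ∈ Sset N Q Nz, f (ω ∘ σ) = ∑ ω ∈ Sset N Q Nz, f ω := by
  apply Finset.sum_nbij' (fun ω => ω ∘ σ) (fun ω => ω ∘ σ.symm)
  · intro a ha; exact comp_mem ha σ
  · intro a ha; exact comp_mem ha σ.symm
  · intro a _; funext i; simp
  · intro a _; funext i; simp
  · intro a _; rfl

variable {N Q : ℕ}

def ind (ω : Fin N → Fin Q) (i : Fin N) (z : Fin Q) : ℝ := if ω i = z then 1 else 0

-- single indicator sum independent of i
lemma sum_ind_const (Nz : Fin Q → ℕ) (i j : Fin N) (z : Fin Q) :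
    ∑ ω ∈ Sset N Q Nz, ind ω i z = ∑ ω ∈ Sset N Q Nz, ind ω j z := by
  have := sum_comp Nz (fun ω => ind ω j z) (Equiv.swap i j)
  simp only [ind] at this ⊢
  rw [← this]
  apply Finset.sum_congr rfl
  intro ω _
  simp [Function.comp, Equiv.swap_apply_right]

lemma M1 (Nz : Fin Q → ℕ) (i : Fin N) (z : Fin Q) :
    (N : ℝ) * ∑ ω ∈ Sset N Q Nz, ind ω i z
      = (Sset N Q Nz).card * (Nz z : ℝ) := by
  have h1 : ∑ j : Fin N, ∑ ω ∈ Sset N Q Nz, ind ω j z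
      = (N : ℝ) * ∑ ω ∈ Sset N Q Nz, ind ω i z := by
    rw [Finset.sum_congr rfl fun j _ => (sum_ind_const Nz j i z)]
    simp [Finset.sum_const, mul_comm]
  rw [← h1, Finset.sum_comm]
  rw [Finset.sum_congr rfl (g := fun _ => (Nz z : ℝ)) ?_, Finset.sum_const,
    nsmul_eq_mul]
  intro ω hω
  simp only [Sset, Finset.mem_filter, Finset.mem_univ, true_and] at hω
  simp only [ind, Finset.sum_boole]
  rw [hω z]
variable {N Q : ℕ}

lemma sum_ind2_const (Nz : Fin Q → ℕ) {i j k l : Fin N} (hij : i ≠ j) (hkl : k ≠ l)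
    (z z' : Fin Q) :
    ∑ ω ∈ Sset N Q Nz, ind ω i z * ind ω j z'
      = ∑ ω ∈ Sset N Q Nz, ind ω k z * ind ω l z' := by
  set σ₁ : Equiv.Perm (Fin N) := Equiv.swap i k with hσ₁
  set l' : Fin N := σ₁ l with hl'
  have hσ₁k : σ₁ k = i := Equiv.swap_apply_right i k
  have hl'i : l' ≠ i := by
    intro h
    exact hkl (σ₁.injective (by rw [← hl', h, hσ₁k] : σ₁ l = σ₁ k)).symm
  set σ₂ : Equiv.Perm (Fin N) := Equiv.swap j l' with hσ₂
  set σ : Equiv.Perm (Fin N) := σ₁.trans σ₂ with hσ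
  have hk : σ k = i := by
    simp only [hσ, Equiv.trans_apply, hσ₁, Equiv.swap_apply_right, hσ₂]
    rw [Equiv.swap_apply_of_ne_of_ne hij (Ne.symm hl'i)]
  have hl : σ l = j := by
    simp only [hσ, Equiv.trans_apply, ← hl', hσ₂, Equiv.swap_apply_right]
  have := sum_comp Nz (fun ω => ind ω k z * ind ω l z') σ
  rw [← this]
  apply Finset.sum_congr rfl
  intro ω _
  simp only [ind, Function.comp_apply, hk, hl]

lemma M2 (Nz : Fin Q → ℕ) {i j : Fin N} (hij : i ≠ j) (z z' : Fin Q) :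
    (N : ℝ) * ((N : ℝ) - 1) * ∑ ω ∈ Sset N Q Nz, ind ω i z * ind ω j z'
      = (Sset N Q Nz).card *
          ((Nz z : ℝ) * (Nz z' : ℝ) - if z = z' then (Nz z : ℝ) else 0) := by
  have key : ∑ k : Fin N, ∑ l ∈ Finset.univ.erase k,
      ∑ ω ∈ Sset N Q Nz, ind ω k z * ind ω l z'
      = (N : ℝ) * ((N : ℝ) - 1) * ∑ ω ∈ Sset N Q Nz, ind ω i z * ind ω j z' := by
    rw [Finset.sum_congr rfl (g := fun k =>
        ((N : ℝ) - 1) * ∑ ω ∈ Sset N Q Nz, ind ω i z * ind ω j z') ?_]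
    · rw [Finset.sum_const, nsmul_eq_mul, Finset.card_univ, Fintype.card_fin]; ring
    · intro k _
      rw [Finset.sum_congr rfl (g := fun _ =>
          ∑ ω ∈ Sset N Q Nz, ind ω i z * ind ω j z') ?_]
      · rw [Finset.sum_const, nsmul_eq_mul, Finset.card_erase_of_mem (Finset.mem_univ k),
          Finset.card_univ, Fintype.card_fin]
        have hN : 1 ≤ N := Nat.one_le_iff_ne_zero.mpr (by rintro rfl; exact i.elim0)
        push_cast [hN]
        ring
      · intro l hl
        exact sum_ind2_const Nz (Finset.ne_of_mem_erase hl).symm hij z z'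
  rw [← key]
  -- now swap sums and evaluate per ω
  have swap1 : ∑ k : Fin N, ∑ l ∈ Finset.univ.erase k,
      ∑ ω ∈ Sset N Q Nz, ind ω k z * ind ω l z'
      = ∑ ω ∈ Sset N Q Nz, ∑ k : Fin N, ∑ l ∈ Finset.univ.erase k,
          ind ω k z * ind ω l z' := by
    rw [Finset.sum_comm]
    apply Finset.sum_congr rfl
    intro k _
    rw [Finset.sum_comm]
  rw [swap1]
  rw [Finset.sum_congr rfl (g := fun ω =>
      ((Nz z : ℝ) * (Nz z' : ℝ) - if z = z' then (Nz z : ℝ) else 0)) ?_]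
  · rw [Finset.sum_const, nsmul_eq_mul]
  · intro ω hω
    simp only [Sset, Finset.mem_filter, Finset.mem_univ, true_and] at hω
    have h1 : ∑ k : Fin N, ind ω k z = (Nz z : ℝ) := by
      simp only [ind, Finset.sum_boole]; rw [hω z]
    have h1' : ∑ l : Fin N, ind ω l z' = (Nz z' : ℝ) := by
      simp only [ind, Finset.sum_boole]; rw [hω z']
    have hdiag : ∑ k : Fin N, ind ω k z * ind ω k z'
        = if z = z' then (Nz z : ℝ) else 0 := by
      by_cases h : z = z'
      · subst h
        simp only [if_true, ← h1]
        apply Finset.sum_congr rfl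
        intro k _
        simp only [ind]
        by_cases hk : ω k = z <;> simp [hk]
      · simp only [h, if_false]
        apply Finset.sum_eq_zero
        intro k _
        simp only [ind]
        by_cases hk : ω k = z
        · simp [hk, h]
        · simp [hk]
    calc ∑ k : Fin N, ∑ l ∈ Finset.univ.erase k, ind ω k z * ind ω l z'
        = ∑ k : Fin N, (ind ω k z * ∑ l : Fin N, ind ω l z'
            - ind ω k z * ind ω k z') := by
          apply Finset.sum_congr rfl
          intro k _
          rw [← Finset.mul_sum, ← mul_sub,
            Finset.sum_erase_eq_sub (Finset.mem_univ k)]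
      _ = (∑ k : Fin N, ind ω k z) * (Nz z' : ℝ)
            - ∑ k : Fin N, ind ω k z * ind ω k z' := by
          rw [Finset.sum_sub_distrib, ← Finset.sum_mul]
          simp [h1']
      _ = (Nz z : ℝ) * (Nz z' : ℝ) - if z = z' then (Nz z : ℝ) else 0 := by
          rw [h1, hdiag]

variable {N Q : ℕ}

lemma filt_sum (ω : Fin N → Fin Q) (z : Fin Q) (g : Fin N → ℝ) :
    ∑ i ∈ Finset.univ.filter (fun i => ω i = z), g i
      = ∑ i : Fin N, ind ω i z * g i := by
  rw [Finset.sum_filter]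
  apply Finset.sum_congr rfl
  intro i _
  simp only [ind]
  by_cases h : ω i = z <;> simp [h]

lemma R1 (Nz : Fin Q → ℕ) (g : Fin N → ℝ) (z : Fin Q) :
    (N : ℝ) * ∑ ω ∈ Sset N Q Nz, ∑ i ∈ Finset.univ.filter (fun i => ω i = z), g i
      = ((Sset N Q Nz).card : ℝ) * (Nz z : ℝ) * ∑ i, g i := by
  simp only [filt_sum]
  rw [Finset.sum_comm, Finset.mul_sum]
  rw [Finset.sum_congr rfl (g := fun i => ((Sset N Q Nz).card : ℝ) * (Nz z : ℝ) * g i) ?_]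
  · rw [← Finset.mul_sum]
  · intro i _
    rw [← Finset.sum_mul, ← mul_assoc, M1 Nz i z]

lemma ind_mul_ind_self (ω : Fin N → Fin Q) (i : Fin N) (z z' : Fin Q) :
    ind ω i z * ind ω i z' = if z = z' then ind ω i z else 0 := by
  simp only [ind]
  by_cases h3 : z = z'
  · subst h3
    by_cases h1 : ω i = z <;> simp [h1]
  · by_cases h1 : ω i = z
    · have h2 : ω i ≠ z' := by rw [h1]; exact h3
      simp [h1, h2, h3]
    · simp [h1, h3]

lemma R2 (Nz : Fin Q → ℕ) (g h : Fin N → ℝ) (z z' : Fin Q) :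
    (N : ℝ) * ((N : ℝ) - 1) *
        ∑ ω ∈ Sset N Q Nz, (∑ i ∈ Finset.univ.filter (fun i => ω i = z), g i) *
          (∑ j ∈ Finset.univ.filter (fun j => ω j = z'), h j)
      = ((Sset N Q Nz).card : ℝ) *
          (((N : ℝ) - 1) * (if z = z' then (Nz z : ℝ) else 0) * ∑ i, g i * h i
            + ((Nz z : ℝ) * (Nz z' : ℝ) - if z = z' then (Nz z : ℝ) else 0) *
              ((∑ i, g i) * (∑ i, h i) - ∑ i, g i * h i)) := by
  simp only [filt_sum]
  have expand : ∀ ω : Fin N → Fin Q,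
      (∑ i : Fin N, ind ω i z * g i) * (∑ j : Fin N, ind ω j z' * h j)
        = ∑ i : Fin N, ∑ j : Fin N,
            (ind ω i z * ind ω j z') * (g i * h j) := by
    intro ω
    rw [Finset.sum_mul_sum]
    apply Finset.sum_congr rfl; intro i _
    apply Finset.sum_congr rfl; intro j _
    ring
  simp only [expand]
  rw [Finset.sum_comm, Finset.mul_sum]
  have inner : ∀ i : Fin N,
      (N : ℝ) * ((N : ℝ) - 1) * ∑ ω ∈ Sset N Q Nz, ∑ j : Fin N,
          (ind ω i z * ind ω j z') * (g i * h j)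
        = ((Sset N Q Nz).card : ℝ) *
            (((N : ℝ) - 1) * (if z = z' then (Nz z : ℝ) else 0) * (g i * h i)
              + ((Nz z : ℝ) * (Nz z' : ℝ) - if z = z' then (Nz z : ℝ) else 0) *
                (g i * (∑ j, h j) - g i * h i)) := by
    intro i
    have diag : (N : ℝ) * ((N : ℝ) - 1) *
        ∑ ω ∈ Sset N Q Nz, (ind ω i z * ind ω i z') * (g i * h i)
        = ((Sset N Q Nz).card : ℝ) *
            (((N : ℝ) - 1) * (if z = z' then (Nz z : ℝ) else 0) * (g i * h i)) := by
      simp only [ind_mul_ind_self]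
      by_cases hzz : z = z'
      · simp only [hzz, if_true]
        rw [← Finset.sum_mul, ← mul_assoc,
          show (N : ℝ) * ((N : ℝ) - 1) * ∑ ω ∈ Sset N Q Nz, ind ω i z'
            = ((N : ℝ) - 1) * ((N : ℝ) * ∑ ω ∈ Sset N Q Nz, ind ω i z') by ring,
          M1 Nz i z']
        ring
      · simp [hzz]
    have offd : ∀ j ∈ Finset.univ.erase i,
        (N : ℝ) * ((N : ℝ) - 1) *
          ∑ ω ∈ Sset N Q Nz, (ind ω i z * ind ω j z') * (g i * h j)
          = ((Sset N Q Nz).card : ℝ) *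
              (((Nz z : ℝ) * (Nz z' : ℝ) - if z = z' then (Nz z : ℝ) else 0) *
                (g i * h j)) := by
      intro j hj
      have hij : i ≠ j := (Finset.ne_of_mem_erase hj).symm
      rw [← Finset.sum_mul, ← mul_assoc, M2 Nz hij z z', mul_assoc]
    calc (N : ℝ) * ((N : ℝ) - 1) * ∑ ω ∈ Sset N Q Nz, ∑ j : Fin N,
          (ind ω i z * ind ω j z') * (g i * h j)
        = ∑ j : Fin N, ((N : ℝ) * ((N : ℝ) - 1) *
            ∑ ω ∈ Sset N Q Nz, (ind ω i z * ind ω j z') * (g i * h j)) := by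
          rw [Finset.sum_comm, Finset.mul_sum]
      _ = (N : ℝ) * ((N : ℝ) - 1) *
            ∑ ω ∈ Sset N Q Nz, (ind ω i z * ind ω i z') * (g i * h i)
          + ∑ j ∈ Finset.univ.erase i, ((N : ℝ) * ((N : ℝ) - 1) *
            ∑ ω ∈ Sset N Q Nz, (ind ω i z * ind ω j z') * (g i * h j)) := by
          rw [← Finset.add_sum_erase _ _ (Finset.mem_univ i)]
      _ = _ := by
          rw [diag, Finset.sum_congr rfl offd]
          have : ∑ j ∈ Finset.univ.erase i,
              ((Sset N Q Nz).card : ℝ) *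
                (((Nz z : ℝ) * (Nz z' : ℝ) - if z = z' then (Nz z : ℝ) else 0) *
                  (g i * h j))
              = ((Sset N Q Nz).card : ℝ) *
                (((Nz z : ℝ) * (Nz z' : ℝ) - if z = z' then (Nz z : ℝ) else 0) *
                  (g i * ((∑ j, h j) - h i))) := by
            simp only [← Finset.mul_sum]
            rw [Finset.sum_erase_eq_sub (Finset.mem_univ i)]
          rw [this]
          ring
  calc ∑ i : Fin N, ((N : ℝ) * ((N : ℝ) - 1) * ∑ ω ∈ Sset N Q Nz, ∑ j : Fin N,
        (ind ω i z * ind ω j z') * (g i * h j))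
      = ∑ i : Fin N, ((Sset N Q Nz).card : ℝ) *
          (((N : ℝ) - 1) * (if z = z' then (Nz z : ℝ) else 0) * (g i * h i)
            + ((Nz z : ℝ) * (Nz z' : ℝ) - if z = z' then (Nz z : ℝ) else 0) *
              (g i * (∑ j, h j) - g i * h i)) :=
        Finset.sum_congr rfl fun i _ => inner i
    _ = _ := by
        simp only [mul_add, mul_sub]
        rw [Finset.sum_add_distrib, Finset.sum_sub_distrib]
        simp only [← Finset.mul_sum, ← Finset.sum_mul]
        all_goals ring
variable {N Q : ℕ}

lemma Sset_nonempty (Nz : Fin Q → ℕ) (hsum : ∑ z, Nz z = N) :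
    (Sset N Q Nz).Nonempty := by
  have hcard : Fintype.card (Σ z : Fin Q, Fin (Nz z)) = Fintype.card (Fin N) := by
    simp [Fintype.card_sigma, hsum]
  let e : (Σ z : Fin Q, Fin (Nz z)) ≃ Fin N := Fintype.equivOfCardEq hcard
  refine ⟨fun i => (e.symm i).1, ?_⟩
  simp only [Sset, Finset.mem_filter, Finset.mem_univ, true_and]
  intro z
  have h1 : (Finset.univ.filter fun i => (e.symm i).1 = z).card
      = (Finset.univ.filter fun s : Σ z', Fin (Nz z') => s.1 = z).card := by
    apply Finset.card_bij' (fun i _ => e.symm i) (fun s _ => e s)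
    · intro a ha
      simp only [Finset.mem_filter, Finset.mem_univ, true_and] at ha ⊢
      exact ha
    · intro s hs
      simp only [Finset.mem_filter, Finset.mem_univ, true_and] at hs ⊢
      simpa using hs
    · intro a _; simp
    · intro s _; simp
  rw [h1]
  have h2 : (Finset.univ.filter fun s : Σ z', Fin (Nz z') => s.1 = z)
      = (Finset.univ.filter (· = z)).sigma (fun z' => (Finset.univ : Finset (Fin (Nz z')))) := by
    ext s
    simp [Finset.mem_sigma, and_comm]
  rw [h2, Finset.card_sigma, Finset.filter_eq']
  simp

lemma sum_sub_mul_sub {α : Type*} (s : Finset α) (f g : α → ℝ) (c d : ℝ) :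
    ∑ x ∈ s, (f x - c) * (g x - d)
      = ∑ x ∈ s, f x * g x - c * ∑ x ∈ s, g x - d * ∑ x ∈ s, f x
        + (s.card : ℝ) * (c * d) := by
  rw [Finset.sum_congr rfl (g := fun x => f x * g x - c * g x - d * f x + c * d)
    (fun x _ => by ring)]
  rw [Finset.sum_add_distrib, Finset.sum_sub_distrib, Finset.sum_sub_distrib,
    ← Finset.mul_sum, ← Finset.mul_sum, Finset.sum_const, nsmul_eq_mul]


end VEC

set_option maxHeartbeats 2000000 in
/-- In a completely randomized experiment, the estimator `V̂ = diag{Ŝ(z,z)/N_z}` built from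
within-group sample variances satisfies `E(V̂) − cov(Ŷ) = N⁻¹ S`, which is positive
semi-definite; hence `V̂` is a conservative covariance estimator. -/
theorem variance_estimator_conservative
    (N Q : ℕ) (Nz : Fin Q → ℕ) (hNz : ∀ z, 2 ≤ Nz z) (hsum : ∑ z, Nz z = N)
    (Y : Fin N → Fin Q → ℝ) :
    let S : Finset (Fin N → Fin Q) :=
      Finset.univ.filter fun ω => ∀ z, (Finset.univ.filter fun i => ω i = z).card = Nz z
    let E : ((Fin N → Fin Q) → ℝ) → ℝ := fun f => (S.card : ℝ)⁻¹ * ∑ ω ∈ S, f ω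
    let Yhat : Fin Q → (Fin N → Fin Q) → ℝ := fun z ω =>
      (Nz z : ℝ)⁻¹ * ∑ i ∈ Finset.univ.filter (fun i => ω i = z), Y i z
    let Ybar : Fin Q → ℝ := fun z => (N : ℝ)⁻¹ * ∑ i, Y i z
    let Scov : Fin Q → Fin Q → ℝ := fun z z' =>
      ((N : ℝ) - 1)⁻¹ * ∑ i, (Y i z - Ybar z) * (Y i z' - Ybar z')
    let Shat : Fin Q → (Fin N → Fin Q) → ℝ := fun z ω =>
      ((Nz z : ℝ) - 1)⁻¹ *
        ∑ i ∈ Finset.univ.filter (fun i => ω i = z), (Y i z - Yhat z ω) ^ 2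
    let Vhat : (Fin N → Fin Q) → Matrix (Fin Q) (Fin Q) ℝ := fun ω =>
      Matrix.of fun z z' => if z = z' then Shat z ω / (Nz z : ℝ) else 0
    let covYhat : Matrix (Fin Q) (Fin Q) ℝ := Matrix.of fun z z' =>
      E (fun ω => (Yhat z ω - E (Yhat z)) * (Yhat z' ω - E (Yhat z')))
    (∀ z z', E (fun ω => Vhat ω z z') - covYhat z z' = Scov z z' / (N : ℝ))
    ∧ Matrix.PosSemidef (Matrix.of fun z z' => Scov z z' / (N : ℝ)) := by
  have hN2 : 0 < Q → 2 ≤ N := by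
    intro hQ
    calc 2 ≤ Nz ⟨0, hQ⟩ := hNz _
      _ ≤ ∑ w, Nz w := Finset.single_le_sum (f := Nz) (fun _ _ => Nat.zero_le _)
            (Finset.mem_univ _)
      _ = N := hsum
  intro S E Yhat Ybar Scov Shat Vhat covYhat
  have hE : ∀ f, E f = ((VEC.Sset N Q Nz).card : ℝ)⁻¹ * ∑ ω ∈ VEC.Sset N Q Nz, f ω :=
    fun f => rfl
  have hK : ((VEC.Sset N Q Nz).card : ℝ) ≠ 0 :=
    Nat.cast_ne_zero.mpr (VEC.Sset_nonempty Nz hsum).card_pos.ne'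
  constructor
  · intro z z'
    have h2n : (2 : ℝ) ≤ (N : ℝ) := by exact_mod_cast hN2 z.pos
    have hn : (N : ℝ) ≠ 0 := by linarith
    have hn1 : (N : ℝ) - 1 ≠ 0 := by linarith
    have h2m : (2 : ℝ) ≤ (Nz z : ℝ) := by exact_mod_cast hNz z
    have hm : (Nz z : ℝ) ≠ 0 := by linarith
    have hm1 : (Nz z : ℝ) - 1 ≠ 0 := by linarith
    have h2m' : (2 : ℝ) ≤ (Nz z' : ℝ) := by exact_mod_cast hNz z'
    have hm' : (Nz z' : ℝ) ≠ 0 := by linarith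
    have hnn1 : (N : ℝ) * ((N : ℝ) - 1) ≠ 0 := mul_ne_zero hn hn1
    -- expected value of Yhat sums
    have hsum1 : ∀ v : Fin Q, ∑ ω ∈ VEC.Sset N Q Nz, Yhat v ω
        = ((VEC.Sset N Q Nz).card : ℝ) * ((N : ℝ)⁻¹ * ∑ i, Y i v) := by
      intro v
      have hmv : (Nz v : ℝ) ≠ 0 := Nat.cast_ne_zero.mpr (by have := hNz v; omega)
      have e1 : ∑ ω ∈ VEC.Sset N Q Nz, Yhat v ω
          = (Nz v : ℝ)⁻¹ * ∑ ω ∈ VEC.Sset N Q Nz,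
              ∑ i ∈ Finset.univ.filter (fun i => ω i = v), Y i v := by
        rw [Finset.mul_sum]
      rw [e1]
      have hT : ∑ ω ∈ VEC.Sset N Q Nz,
          ∑ i ∈ Finset.univ.filter (fun i => ω i = v), Y i v
          = ((VEC.Sset N Q Nz).card : ℝ) * (Nz v : ℝ) * (∑ i, Y i v) / (N : ℝ) :=
        (eq_div_iff hn).mpr (by rw [mul_comm]; exact VEC.R1 Nz (fun i => Y i v) v)
      rw [hT]
      field_simp
    have hEY : ∀ v : Fin Q, E (Yhat v) = (N : ℝ)⁻¹ * ∑ i, Y i v := by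
      intro v
      rw [hE, hsum1, inv_mul_cancel_left₀ hK]
    -- product sum
    have hprod : ∑ ω ∈ VEC.Sset N Q Nz, Yhat z ω * Yhat z' ω
        = (Nz z : ℝ)⁻¹ * ((Nz z' : ℝ)⁻¹ * (((VEC.Sset N Q Nz).card : ℝ) *
            (((N : ℝ) - 1) * (if z = z' then (Nz z : ℝ) else 0) *
                (∑ i, Y i z * Y i z')
              + ((Nz z : ℝ) * (Nz z' : ℝ) - if z = z' then (Nz z : ℝ) else 0) *
                ((∑ i, Y i z) * (∑ i, Y i z') - ∑ i, Y i z * Y i z'))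
            / ((N : ℝ) * ((N : ℝ) - 1)))) := by
      have e2 : ∑ ω ∈ VEC.Sset N Q Nz, Yhat z ω * Yhat z' ω
          = (Nz z : ℝ)⁻¹ * ((Nz z' : ℝ)⁻¹ * ∑ ω ∈ VEC.Sset N Q Nz,
              (∑ i ∈ Finset.univ.filter (fun i => ω i = z), Y i z) *
                (∑ j ∈ Finset.univ.filter (fun j => ω j = z'), Y j z')) := by
        rw [Finset.mul_sum, Finset.mul_sum]
        exact Finset.sum_congr rfl fun ω _ => by
          rw [show Yhat z ω = (Nz z : ℝ)⁻¹ *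
              ∑ i ∈ Finset.univ.filter (fun i => ω i = z), Y i z from rfl,
            show Yhat z' ω = (Nz z' : ℝ)⁻¹ *
              ∑ j ∈ Finset.univ.filter (fun j => ω j = z'), Y j z' from rfl]
          ring
      rw [e2]
      congr 2
      exact (eq_div_iff hnn1).mpr
        (by rw [mul_comm]; exact VEC.R2 Nz (fun i => Y i z) (fun i => Y i z') z z')
    -- unfold covYhat and Scov
    rw [show covYhat z z' = E (fun ω =>
        (Yhat z ω - E (Yhat z)) * (Yhat z' ω - E (Yhat z'))) from rfl,
      show Scov z z' = ((N : ℝ) - 1)⁻¹ *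
        ∑ i, (Y i z - Ybar z) * (Y i z' - Ybar z') from rfl,
      show Ybar z = (N : ℝ)⁻¹ * ∑ i, Y i z from rfl,
      show Ybar z' = (N : ℝ)⁻¹ * ∑ i, Y i z' from rfl,
      VEC.sum_sub_mul_sub, Finset.card_univ, Fintype.card_fin]
    rw [hE (fun ω => (Yhat z ω - E (Yhat z)) * (Yhat z' ω - E (Yhat z'))),
      VEC.sum_sub_mul_sub, hprod, hsum1, hsum1, hEY, hEY]
    by_cases hzz : z = z'
    · subst hzz
      -- diagonal case: compute E of Shat/Nz
      have hV : (fun ω => Vhat ω z z) = fun ω => Shat z ω / (Nz z : ℝ) := by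
        funext ω
        show (if z = z then Shat z ω / (Nz z : ℝ) else 0) = _
        rw [if_pos rfl]
      rw [hV, hE]
      -- pointwise Shat identity
      have hShat_pt : ∀ ω ∈ VEC.Sset N Q Nz, Shat z ω
          = ((Nz z : ℝ) - 1)⁻¹ *
              ((∑ i ∈ Finset.univ.filter (fun i => ω i = z), Y i z * Y i z)
                - (Nz z : ℝ)⁻¹ *
                  ((∑ i ∈ Finset.univ.filter (fun i => ω i = z), Y i z) *
                    (∑ i ∈ Finset.univ.filter (fun i => ω i = z), Y i z))) := by
        intro ω hω
        have hcard : (((Finset.univ.filter fun i => ω i = z)).card : ℝ) = (Nz z : ℝ) := by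
          simp only [VEC.Sset, Finset.mem_filter, Finset.mem_univ, true_and] at hω
          exact_mod_cast congrArg Nat.cast (hω z)
        rw [show Shat z ω = ((Nz z : ℝ) - 1)⁻¹ *
            ∑ i ∈ Finset.univ.filter (fun i => ω i = z),
              (Y i z - Yhat z ω) ^ 2 from rfl]
        congr 1
        rw [Finset.sum_congr rfl (g := fun i =>
            Y i z * Y i z - (2 * Yhat z ω) * Y i z + Yhat z ω * Yhat z ω)
          (fun i _ => by ring),
          Finset.sum_add_distrib, Finset.sum_sub_distrib, ← Finset.mul_sum,
          Finset.sum_const, nsmul_eq_mul, hcard,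
          show Yhat z ω = (Nz z : ℝ)⁻¹ *
            ∑ i ∈ Finset.univ.filter (fun i => ω i = z), Y i z from rfl]
        field_simp
        ring
      have hT3 : ∑ ω ∈ VEC.Sset N Q Nz,
          ∑ i ∈ Finset.univ.filter (fun i => ω i = z), Y i z * Y i z
          = ((VEC.Sset N Q Nz).card : ℝ) * (Nz z : ℝ) * (∑ i, Y i z * Y i z) / (N : ℝ) :=
        (eq_div_iff hn).mpr (by rw [mul_comm]; exact VEC.R1 Nz (fun i => Y i z * Y i z) z)
      have hT2z : ∑ ω ∈ VEC.Sset N Q Nz,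
          (∑ i ∈ Finset.univ.filter (fun i => ω i = z), Y i z) *
            (∑ j ∈ Finset.univ.filter (fun j => ω j = z), Y j z)
          = ((VEC.Sset N Q Nz).card : ℝ) *
              (((N : ℝ) - 1) * (Nz z : ℝ) * (∑ i, Y i z * Y i z)
                + ((Nz z : ℝ) * (Nz z : ℝ) - (Nz z : ℝ)) *
                  ((∑ i, Y i z) * (∑ i, Y i z) - ∑ i, Y i z * Y i z))
              / ((N : ℝ) * ((N : ℝ) - 1)) := by
        refine (eq_div_iff hnn1).mpr ?_
        rw [mul_comm]
        have := VEC.R2 Nz (fun i => Y i z) (fun i => Y i z) z z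
        simpa using this
      have hShatsum : ∑ ω ∈ VEC.Sset N Q Nz, Shat z ω / (Nz z : ℝ)
          = (((VEC.Sset N Q Nz).card : ℝ) * (Nz z : ℝ) * (∑ i, Y i z * Y i z) / (N : ℝ)
              - (Nz z : ℝ)⁻¹ * (((VEC.Sset N Q Nz).card : ℝ) *
                (((N : ℝ) - 1) * (Nz z : ℝ) * (∑ i, Y i z * Y i z)
                  + ((Nz z : ℝ) * (Nz z : ℝ) - (Nz z : ℝ)) *
                    ((∑ i, Y i z) * (∑ i, Y i z) - ∑ i, Y i z * Y i z))
                / ((N : ℝ) * ((N : ℝ) - 1))))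
              * (((Nz z : ℝ) - 1)⁻¹ / (Nz z : ℝ)) := by
        rw [Finset.sum_congr rfl (fun ω hω => by rw [hShat_pt ω hω]),
          ← Finset.sum_div, ← Finset.mul_sum, Finset.sum_sub_distrib,
          ← Finset.mul_sum, hT3, hT2z]
        ring
      rw [hShatsum]
      simp only [eq_self_iff_true, if_true]
      field_simp
      ring
    · -- off-diagonal case
      have hV : (fun ω => Vhat ω z z') = fun _ => (0 : ℝ) := by
        funext ω
        show (if z = z' then Shat z ω / (Nz z : ℝ) else 0) = 0
        rw [if_neg hzz]
      rw [hV, hE]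
      simp only [if_neg hzz, Finset.sum_const, smul_zero, mul_zero]
      field_simp
      ring
  · -- positive semidefiniteness
    rcases Nat.eq_zero_or_pos Q with hQ | hQ
    · subst hQ
      constructor
      · ext i j
        exact i.elim0
      · intro x
        rw [Subsingleton.elim x 0]
        simp
    · have h2n : (2 : ℝ) ≤ (N : ℝ) := by exact_mod_cast hN2 hQ
      have hc : (0 : ℝ) ≤ ((N : ℝ) - 1)⁻¹ * (N : ℝ)⁻¹ := by
        apply mul_nonneg <;> rw [inv_nonneg] <;> linarith
      set c : ℝ := ((N : ℝ) - 1)⁻¹ * (N : ℝ)⁻¹ with hcdef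
      set B : Matrix (Fin N) (Fin Q) ℝ :=
        Matrix.of fun (i : Fin N) (z : Fin Q) =>
          Real.sqrt c * (Y i z - Ybar z) with hB
      have hM : (Matrix.of fun z z' => Scov z z' / (N : ℝ)) = B.conjTranspose * B := by
        ext z z'
        rw [Matrix.mul_apply]
        simp only [Matrix.of_apply, Matrix.conjTranspose_apply, hB, star_trivial]
        rw [Finset.sum_congr rfl (g := fun i =>
            c * ((Y i z - Ybar z) * (Y i z' - Ybar z')))
          (fun i _ => by
            rw [show Real.sqrt c * (Y i z - Ybar z) * (Real.sqrt c * (Y i z' - Ybar z'))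
                = (Real.sqrt c * Real.sqrt c) * ((Y i z - Ybar z) * (Y i z' - Ybar z')) by ring,
              Real.mul_self_sqrt hc]),
          ← Finset.mul_sum,
          show Scov z z' = ((N : ℝ) - 1)⁻¹ *
            ∑ i, (Y i z - Ybar z) * (Y i z' - Ybar z') from rfl,
          hcdef, div_eq_mul_inv]
        ring
      rw [hM]
      exact Matrix.posSemidef_conjTranspose_mul_self B
end

section
/- In a 2² factorial experiment, the least-squares coefficient vector of (A_i − δ_A, B_i − δ_B, (A_i−δ_A)(B_i−δ_B)) from the saturated regression of Y_i on an intercept and these three regressors equals (τ̂_A(π_B), τ̂_B(π_A), τ̂_AB), where π_A = (1−δ_A, δ_A), π_B = (1−δ_B, δ_B), τ̂_A(π_B) = (1−δ_B)(Ŷ(10)−Ŷ(00)) + δ_B(Ŷ(11)−Ŷ(01)), τ̂_B(π_A) = (1−δ_A)(Ŷ(01)−Ŷ(00)) + δ_A(Ŷ(11)−Ŷ(10)), and τ̂_AB = Ŷ(11)−Ŷ(10)−Ŷ(01)+Ŷ(00). -/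
open Matrix

/-- In a 2² factorial experiment, the least-squares coefficients of the location-shifted
regressors `A−δ_A`, `B−δ_B`, `(A−δ_A)(B−δ_B)` in the saturated regression with intercept
equal the moment estimators `τ̂_A(π_B)`, `τ̂_B(π_A)`, `τ̂_AB` with
`π_A = (1−δ_A, δ_A)`, `π_B = (1−δ_B, δ_B)`. -/
theorem saturated_regression_2x2_coefficients
    (N : ℕ) (A B : Fin N → Bool) (Y : Fin N → ℝ)
    (δA δB : ℝ) (hδA : 0 ≤ δA ∧ δA ≤ 1) (hδB : 0 ≤ δB ∧ δB ≤ 1)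
    (hcell : ∀ a b : Bool, (Finset.univ.filter fun i => A i = a ∧ B i = b).Nonempty)
    (X : Matrix (Fin N) (Fin 4) ℝ)
    (hX : ∀ i, X i 0 = 1
      ∧ X i 1 = (cond (A i) 1 0 : ℝ) - δA
      ∧ X i 2 = (cond (B i) 1 0 : ℝ) - δB
      ∧ X i 3 = ((cond (A i) 1 0 : ℝ) - δA) * ((cond (B i) 1 0 : ℝ) - δB))
    (β : Fin 4 → ℝ)
    (hβ : (X.transpose * X) *ᵥ β = X.transpose *ᵥ Y) :
    let cell : Bool → Bool → Finset (Fin N) :=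
      fun a b => Finset.univ.filter fun i => A i = a ∧ B i = b
    let Yhat : Bool → Bool → ℝ :=
      fun a b => ((cell a b).card : ℝ)⁻¹ * ∑ i ∈ cell a b, Y i
    β 1 = (1 - δB) * (Yhat true false - Yhat false false)
            + δB * (Yhat true true - Yhat false true)
    ∧ β 2 = (1 - δA) * (Yhat false true - Yhat false false)
            + δA * (Yhat true true - Yhat true false)
    ∧ β 3 = Yhat true true - Yhat true false - Yhat false true + Yhat false false := by
  intro cell Yhat
  classical
  -- regressor values as a function of the cell
  set x : Fin 4 → Bool → Bool → ℝ := fun j a b =>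
    ![(1:ℝ), (cond a 1 0 : ℝ) - δA, (cond b 1 0 : ℝ) - δB,
      ((cond a 1 0 : ℝ) - δA) * ((cond b 1 0 : ℝ) - δB)] j with hxdef
  have hXval : ∀ i (j : Fin 4), X i j = x j (A i) (B i) := by
    intro i j
    obtain ⟨h0, h1, h2, h3⟩ := hX i
    fin_cases j <;> simp [hxdef, h0, h1, h2, h3]
  -- fitted value in cell (a,b)
  set μ : Bool → Bool → ℝ := fun a b => ∑ k, x k a b * β k with hμdef
  -- normal equations
  have hNE : ∀ j : Fin 4,
      ∑ i, x j (A i) (B i) * μ (A i) (B i) = ∑ i, x j (A i) (B i) * Y i := by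
    intro j
    have h := congrFun hβ j
    simp only [Matrix.mulVec, Matrix.mul_apply, dotProduct,
      Matrix.transpose_apply] at h
    calc ∑ i, x j (A i) (B i) * μ (A i) (B i)
        = ∑ i, ∑ k, X i j * X i k * β k := by
          refine Finset.sum_congr rfl fun i _ => ?_
          rw [hμdef, Finset.mul_sum]
          exact Finset.sum_congr rfl fun k _ => by rw [hXval i j, hXval i k]; ring
      _ = ∑ k, (∑ i, X i j * X i k) * β k := by
          rw [Finset.sum_comm]
          exact Finset.sum_congr rfl fun k _ => (Finset.sum_mul _ _ _).symm
      _ = ∑ i, X i j * Y i := h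
      _ = ∑ i, x j (A i) (B i) * Y i := by
          exact Finset.sum_congr rfl fun i _ => by rw [hXval]
  -- cell sizes, sums, and residual aggregates
  set w : Bool → Bool → ℝ :=
    fun a b => ((cell a b).card : ℝ) * μ a b - ∑ i ∈ cell a b, Y i with hwdef
  have hcellfib : ∀ p : Bool × Bool,
      (Finset.univ.filter fun i => (A i, B i) = p) = cell p.1 p.2 := by
    intro p; ext i; simp [cell, Prod.ext_iff]
  have hsplit : ∀ F : Fin N → ℝ, ∑ i, F i = ∑ p : Bool × Bool, ∑ i ∈ cell p.1 p.2, F i := by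
    intro F
    rw [← Finset.sum_fiberwise Finset.univ (fun i => (A i, B i)) F]
    exact Finset.sum_congr rfl fun p _ => by rw [hcellfib]
  have hmem : ∀ (a b : Bool) (i : Fin N), i ∈ cell a b → A i = a ∧ B i = b := by
    intro a b i hi
    simpa [cell] using hi
  have hfib : ∀ j : Fin 4, ∑ p : Bool × Bool, x j p.1 p.2 * w p.1 p.2 = 0 := by
    intro j
    have h := hNE j
    rw [hsplit fun i => x j (A i) (B i) * μ (A i) (B i),
        hsplit fun i => x j (A i) (B i) * Y i] at h
    have hL : ∀ p : Bool × Bool, ∑ i ∈ cell p.1 p.2, x j (A i) (B i) * μ (A i) (B i)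
        = x j p.1 p.2 * (((cell p.1 p.2).card : ℝ) * μ p.1 p.2) := by
      intro p
      rw [Finset.sum_congr rfl fun i hi => by
        rw [(hmem p.1 p.2 i hi).1, (hmem p.1 p.2 i hi).2]]
      rw [Finset.sum_const, nsmul_eq_mul]; ring
    have hR : ∀ p : Bool × Bool, ∑ i ∈ cell p.1 p.2, x j (A i) (B i) * Y i
        = x j p.1 p.2 * ∑ i ∈ cell p.1 p.2, Y i := by
      intro p
      rw [Finset.mul_sum]
      exact Finset.sum_congr rfl fun i hi => by
        rw [(hmem p.1 p.2 i hi).1, (hmem p.1 p.2 i hi).2]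
    calc ∑ p : Bool × Bool, x j p.1 p.2 * w p.1 p.2
        = ∑ p : Bool × Bool, (x j p.1 p.2 * (((cell p.1 p.2).card : ℝ) * μ p.1 p.2)
            - x j p.1 p.2 * ∑ i ∈ cell p.1 p.2, Y i) := by
          exact Finset.sum_congr rfl fun p _ => by rw [hwdef]; ring
      _ = (∑ p : Bool × Bool, ∑ i ∈ cell p.1 p.2, x j (A i) (B i) * μ (A i) (B i))
            - ∑ p : Bool × Bool, ∑ i ∈ cell p.1 p.2, x j (A i) (B i) * Y i := by
          rw [Finset.sum_sub_distrib]
          congr 1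
          · exact Finset.sum_congr rfl fun p _ => (hL p).symm
          · exact Finset.sum_congr rfl fun p _ => (hR p).symm
      _ = 0 := sub_eq_zero_of_eq h
  have E0 := hfib 0
  have E1 := hfib 1
  have E2 := hfib 2
  have E3 := hfib 3
  simp only [hxdef, Fintype.sum_prod_type, Fintype.sum_bool, Matrix.cons_val_zero,
    Matrix.cons_val_one, Matrix.head_cons, Matrix.cons_val_two, Matrix.tail_cons,
    Matrix.cons_val_three, Bool.cond_true, Bool.cond_false] at E0 E1 E2 E3
  have h11 : w true true = 0 := by linear_combination E3 + δA * E2 + δB * E1 + δA * δB * E0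
  have h10 : w true false = 0 := by linear_combination E1 + δA * E0 - h11
  have h01 : w false true = 0 := by linear_combination E2 + δB * E0 - h11
  have h00 : w false false = 0 := by linear_combination E0 - h11 - h10 - h01
  have hw0 : ∀ a b, w a b = 0 := by
    intro a b; cases a <;> cases b <;> assumption
  have hn : ∀ a b : Bool, ((cell a b).card : ℝ) ≠ 0 := by
    intro a b
    exact_mod_cast Finset.card_ne_zero_of_mem (hcell a b).choose_spec
  have hY : ∀ a b : Bool, Yhat a b = μ a b := by
    intro a b
    have hw := hw0 a b
    rw [hwdef] at hw
    have hs : (∑ i ∈ cell a b, Y i) = ((cell a b).card : ℝ) * μ a b := by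
      linear_combination -hw
    simp only [Yhat, hs]
    field_simp
  refine ⟨?_, ?_, ?_⟩ <;>
    simp only [hY, hμdef, hxdef, Fin.sum_univ_four, Matrix.cons_val_zero, Matrix.cons_val_one,
      Matrix.head_cons, Matrix.cons_val_two, Matrix.tail_cons, Matrix.cons_val_three,
      Bool.cond_true, Bool.cond_false] <;> ring
end

section
/- In a 2² factorial experiment, the coefficient of A_i (respectively B_i) in the unsaturated additive least-squares regression Y_i ~ 1 + A_i + B_i equals the weighted average π̃_{B=0}·τ̂_{A|B=0} + π̃_{B=1}·τ̂_{A|B=1} (respectively π̃_{A=0}·τ̂_{B|A=0} + π̃_{A=1}·τ̂_{B|A=1}) of the conditional difference-in-means estimators, with weights π̃_{B=0} = (e_{01}^{-1}+e_{11}^{-1})/σ, π̃_{B=1} = (e_{00}^{-1}+e_{10}^{-1})/σ, π̃_{A=0} = (e_{10}^{-1}+e_{11}^{-1})/σ, π̃_{A=1} = (e_{00}^{-1}+e_{01}^{-1})/σ, where e_{ab} = N_{ab}/N and σ = Σ_{a,b} e_{ab}^{-1}. -/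
open Matrix

private lemma sum_partition' {N : ℕ} (A B : Fin N → Bool) (g : Fin N → ℝ) :
    ∑ i, g i
      = (∑ i ∈ Finset.univ.filter fun i => A i = false ∧ B i = false, g i)
      + (∑ i ∈ Finset.univ.filter fun i => A i = false ∧ B i = true, g i)
      + (∑ i ∈ Finset.univ.filter fun i => A i = true ∧ B i = false, g i)
      + (∑ i ∈ Finset.univ.filter fun i => A i = true ∧ B i = true, g i) := by
  classical
  rw [← Finset.sum_fiberwise Finset.univ (fun i => (A i, B i)) g, Fintype.sum_prod_type]
  simp only [Fintype.sum_bool, Prod.mk.injEq]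
  ring

private lemma aux_solve (n00 n01 n10 n11 NN b0 b1 b2 S00 S01 S10 S11 : ℝ)
    (h00 : 0 < n00) (h01 : 0 < n01) (h10 : 0 < n10) (h11 : 0 < n11) (hN : 0 < NN)
    (E1 : (n00 + n01 + n10 + n11) * b0 + (n10 + n11) * b1 + (n01 + n11) * b2
        = S00 + S01 + S10 + S11)
    (E2 : (n10 + n11) * b0 + (n10 + n11) * b1 + n11 * b2 = S10 + S11)
    (E3 : (n01 + n11) * b0 + n11 * b1 + (n01 + n11) * b2 = S01 + S11) :
    b1 = ((n01 / NN)⁻¹ + (n11 / NN)⁻¹)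
          / ((n00 / NN)⁻¹ + (n01 / NN)⁻¹ + ((n10 / NN)⁻¹ + (n11 / NN)⁻¹))
          * (n10⁻¹ * S10 - n00⁻¹ * S00)
       + ((n00 / NN)⁻¹ + (n10 / NN)⁻¹)
          / ((n00 / NN)⁻¹ + (n01 / NN)⁻¹ + ((n10 / NN)⁻¹ + (n11 / NN)⁻¹))
          * (n11⁻¹ * S11 - n01⁻¹ * S01)
    ∧ b2 = ((n10 / NN)⁻¹ + (n11 / NN)⁻¹)
          / ((n00 / NN)⁻¹ + (n01 / NN)⁻¹ + ((n10 / NN)⁻¹ + (n11 / NN)⁻¹))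
          * (n01⁻¹ * S01 - n00⁻¹ * S00)
       + ((n00 / NN)⁻¹ + (n01 / NN)⁻¹)
          / ((n00 / NN)⁻¹ + (n01 / NN)⁻¹ + ((n10 / NN)⁻¹ + (n11 / NN)⁻¹))
          * (n11⁻¹ * S11 - n10⁻¹ * S10) := by
  have hdet : (0:ℝ) < n00 * n01 * n10 + n00 * n01 * n11 + n00 * n10 * n11 + n01 * n10 * n11 := by
    positivity
  have hσ : (0:ℝ) < (n00 / NN)⁻¹ + (n01 / NN)⁻¹ + ((n10 / NN)⁻¹ + (n11 / NN)⁻¹) := by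
    positivity
  constructor
  · have hb1 : b1 = (n00 * (n01 + n11) * S10 - n10 * (n01 + n11) * S00
        + n01 * (n00 + n10) * S11 - n11 * (n00 + n10) * S01)
        / (n00 * n01 * n10 + n00 * n01 * n11 + n00 * n10 * n11 + n01 * n10 * n11) := by
      rw [eq_div_iff hdet.ne']
      linear_combination (-(n10 * (n01 + n11))) * E1 + ((n01 + n11) * (n00 + n10)) * E2
        + (n01 * n10 - n00 * n11) * E3
    rw [hb1]
    field_simp
    ring
  · have hb2 : b2 = (n00 * (n10 + n11) * S01 - n01 * (n10 + n11) * S00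
        + n10 * (n00 + n01) * S11 - n11 * (n00 + n01) * S10)
        / (n00 * n01 * n10 + n00 * n01 * n11 + n00 * n10 * n11 + n01 * n10 * n11) := by
      rw [eq_div_iff hdet.ne']
      linear_combination (-(n01 * (n10 + n11))) * E1 + (n01 * n10 - n00 * n11) * E2
        + ((n10 + n11) * (n00 + n01)) * E3
    rw [hb2]
    field_simp
    ring

/-- In a 2² factorial experiment, the coefficients of `A` and `B` in the unsaturated
additive regression `Y ~ 1 + A + B` equal specific weighted averages of the conditional
difference-in-means estimators, with weights determined by the cell proportions
`e_{ab} = N_{ab}/N` and `σ = Σ e_{ab}⁻¹`. -/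
theorem additive_regression_2x2_coefficients
    (N : ℕ) (A B : Fin N → Bool) (Y : Fin N → ℝ)
    (hcell : ∀ a b : Bool, (Finset.univ.filter fun i => A i = a ∧ B i = b).Nonempty)
    (X : Matrix (Fin N) (Fin 3) ℝ)
    (hX : ∀ i, X i 0 = 1 ∧ X i 1 = (cond (A i) 1 0 : ℝ) ∧ X i 2 = (cond (B i) 1 0 : ℝ))
    (β : Fin 3 → ℝ)
    (hβ : (X.transpose * X) *ᵥ β = X.transpose *ᵥ Y) :
    let cell : Bool → Bool → Finset (Fin N) :=
      fun a b => Finset.univ.filter fun i => A i = a ∧ B i = b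
    let Yhat : Bool → Bool → ℝ :=
      fun a b => ((cell a b).card : ℝ)⁻¹ * ∑ i ∈ cell a b, Y i
    let e : Bool → Bool → ℝ := fun a b => ((cell a b).card : ℝ) / (N : ℝ)
    let σ : ℝ := ∑ a : Bool, ∑ b : Bool, (e a b)⁻¹
    β 1 = ((e false true)⁻¹ + (e true true)⁻¹) / σ * (Yhat true false - Yhat false false)
        + ((e false false)⁻¹ + (e true false)⁻¹) / σ * (Yhat true true - Yhat false true)
    ∧ β 2 = ((e true false)⁻¹ + (e true true)⁻¹) / σ * (Yhat false true - Yhat false false)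
        + ((e false false)⁻¹ + (e false true)⁻¹) / σ * (Yhat true true - Yhat true false) := by
  classical
  intro cell Yhat e σ
  -- abbreviations
  set F : Bool → Bool → Finset (Fin N) :=
    (fun a b => Finset.univ.filter fun i => A i = a ∧ B i = b) with hF
  have hmem : ∀ (a b : Bool) i, i ∈ F a b → A i = a ∧ B i = b := by
    intro a b i hi
    simpa [hF] using hi
  -- master sum evaluation
  have hsum : ∀ (φ : Fin N → ℝ) (u : Bool → Bool → ℝ) (g : Fin N → ℝ),
      (∀ i, φ i = u (A i) (B i) * g i) →
      ∑ i, φ i = u false false * (∑ i ∈ F false false, g i)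
        + u false true * (∑ i ∈ F false true, g i)
        + u true false * (∑ i ∈ F true false, g i)
        + u true true * (∑ i ∈ F true true, g i) := by
    intro φ u g hφ
    rw [sum_partition' A B φ]
    have hc : ∀ a b : Bool, ∑ i ∈ F a b, φ i = u a b * ∑ i ∈ F a b, g i := by
      intro a b
      rw [Finset.mul_sum]
      refine Finset.sum_congr rfl fun i hi => ?_
      obtain ⟨h1, h2⟩ := hmem a b i hi
      rw [hφ i, h1, h2]
    rw [hc false false, hc false true, hc true false, hc true true]
  -- cell cardinalities and sums
  set n : Bool → Bool → ℝ := fun a b => ((F a b).card : ℝ) with hn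
  set S : Bool → Bool → ℝ := fun a b => ∑ i ∈ F a b, Y i with hS
  have hnpos : ∀ a b, 0 < n a b := by
    intro a b
    have := Finset.card_pos.mpr (hcell a b)
    simp only [hn]
    exact_mod_cast this
  have hcard : ∀ a b : Bool, ∑ i ∈ F a b, (1:ℝ) = n a b := by
    intro a b; simp [hn]
  -- the nine sums
  have hX0 : ∀ i, X i 0 = 1 := fun i => (hX i).1
  have hX1 : ∀ i, X i 1 = (cond (A i) 1 0 : ℝ) := fun i => (hX i).2.1
  have hX2 : ∀ i, X i 2 = (cond (B i) 1 0 : ℝ) := fun i => (hX i).2.2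
  have s00 : ∑ i, X i 0 * X i 0 = n false false + n false true + n true false + n true true := by
    rw [hsum _ (fun _ _ => 1) (fun _ => 1) (fun i => by rw [hX0])]
    simp [hcard]
  have s01 : ∑ i, X i 0 * X i 1 = n true false + n true true := by
    rw [hsum _ (fun a _ => cond a 1 0) (fun _ => 1) (fun i => by rw [hX0 i, hX1 i]; ring)]
    simp [hcard]
  have s02 : ∑ i, X i 0 * X i 2 = n false true + n true true := by
    rw [hsum _ (fun _ b => cond b 1 0) (fun _ => 1) (fun i => by rw [hX0 i, hX2 i]; ring)]
    simp [hcard]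
  have s11 : ∑ i, X i 1 * X i 1 = n true false + n true true := by
    rw [hsum _ (fun a _ => cond a 1 0 * cond a 1 0) (fun _ => 1)
      (fun i => by rw [hX1 i]; ring)]
    simp [hcard]
  have s12 : ∑ i, X i 1 * X i 2 = n true true := by
    rw [hsum _ (fun a b => cond a 1 0 * cond b 1 0) (fun _ => 1)
      (fun i => by rw [hX1 i, hX2 i]; ring)]
    simp [hcard]
  have s22 : ∑ i, X i 2 * X i 2 = n false true + n true true := by
    rw [hsum _ (fun _ b => cond b 1 0 * cond b 1 0) (fun _ => 1)
      (fun i => by rw [hX2 i]; ring)]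
    simp [hcard]
  have t0 : ∑ i, X i 0 * Y i = S false false + S false true + S true false + S true true := by
    rw [hsum _ (fun _ _ => 1) Y (fun i => by rw [hX0])]
    simp [hS]
  have t1 : ∑ i, X i 1 * Y i = S true false + S true true := by
    rw [hsum _ (fun a _ => cond a 1 0) Y (fun i => by rw [hX1 i])]
    simp [hS]
  have t2 : ∑ i, X i 2 * Y i = S false true + S true true := by
    rw [hsum _ (fun _ b => cond b 1 0) Y (fun i => by rw [hX2 i])]
    simp [hS]
  -- normal equations
  have hβ0 := congrFun hβ 0
  have hβ1 := congrFun hβ 1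
  have hβ2 := congrFun hβ 2
  simp only [Matrix.mulVec, Matrix.mul_apply, Matrix.transpose_apply, dotProduct,
    Fin.sum_univ_three] at hβ0 hβ1 hβ2
  rw [s00, s01, s02, t0] at hβ0
  rw [show ∑ i, X i 1 * X i 0 = n true false + n true true by
        simpa [mul_comm] using s01,
      s11, s12, t1] at hβ1
  rw [show ∑ i, X i 2 * X i 0 = n false true + n true true by
        simpa [mul_comm] using s02,
      show ∑ i, X i 2 * X i 1 = n true true by
        simpa [mul_comm] using s12,
      s22, t2] at hβ2
  -- positivity of N
  have hNpos : (0:ℝ) < N := by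
    obtain ⟨i, _⟩ := hcell true true
    exact_mod_cast i.pos
  -- apply the algebra lemma
  have E1 : (n false false + n false true + n true false + n true true) * β 0
      + (n true false + n true true) * β 1 + (n false true + n true true) * β 2
      = S false false + S false true + S true false + S true true := by
    linear_combination hβ0
  have E2 : (n true false + n true true) * β 0 + (n true false + n true true) * β 1
      + n true true * β 2 = S true false + S true true := by
    linear_combination hβ1
  have E3 : (n false true + n true true) * β 0 + n true true * β 1
      + (n false true + n true true) * β 2 = S false true + S true true := by
    linear_combination hβ2
  obtain ⟨hb1, hb2⟩ := aux_solve (n false false) (n false true) (n true false) (n true true)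
    (N : ℝ) (β 0) (β 1) (β 2) (S false false) (S false true) (S true false) (S true true)
    (hnpos false false) (hnpos false true) (hnpos true false) (hnpos true true) hNpos
    E1 E2 E3
  have hσ' : σ = (n false false / N)⁻¹ + (n false true / N)⁻¹
      + ((n true false / N)⁻¹ + (n true true / N)⁻¹) := by
    show (∑ a : Bool, ∑ b : Bool, (e a b)⁻¹) = _
    rw [Fintype.sum_bool, Fintype.sum_bool, Fintype.sum_bool]
    show ((n true true / N)⁻¹ + (n true false / N)⁻¹)
      + ((n false true / N)⁻¹ + (n false false / N)⁻¹) = _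
    ring
  have he' : ∀ a b, e a b = n a b / N := fun a b => rfl
  have hYhat' : ∀ a b, Yhat a b = (n a b)⁻¹ * S a b := fun a b => rfl
  constructor
  · rw [hYhat', hYhat', hYhat', hYhat', he', he', he', he', hσ']
    exact hb1
  · rw [hYhat', hYhat', hYhat', hYhat', he', he', he', he', hσ']
    exact hb2
end
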